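/- Let f: ℝ^{m×n} → ℝ be differentiable and g(A,B) = f(ABᵀ) + (λ/2)(‖A‖_F² + ‖B‖_F²) with λ ≥ 0. If (A, B) is a stationary point of g with X = ABᵀ having compact SVD X = L Σ Rᵀ (and, when λ > 0, writing A = LΣ^{1/2}W, B = RΣ^{1/2}W for orthogonal W), then ∇f(X)·R = −λL and ∇f(X)ᵀ·L = −λR; consequently ∇f(X) = −λ L Rᵀ + S for some S ∈ ℝ^{m×n} with LᵀS = 0 and SR = 0. -/

import Mathlib

open Matrix BigOperators

/-- Frobenius norm of a real matrix. -/
noncomputable def frob {m n : ℕ} (X : Matrix (Fin m) (Fin n) ℝ) : ℝ :=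
  Real.sqrt (∑ i, ∑ j, (X i j) ^ 2)

/-- Frobenius (trace) inner product ⟨A,B⟩ = tr(AᵀB). -/
def mip {m n : ℕ} (A B : Matrix (Fin m) (Fin n) ℝ) : ℝ :=
  ∑ i, ∑ j, A i j * B i j

/-- Nuclear norm: sum of singular values, i.e. sum of square roots of the
eigenvalues of XᴴX. -/
noncomputable def nuc {m n : ℕ} (X : Matrix (Fin m) (Fin n) ℝ) : ℝ :=
  ∑ i, Real.sqrt ((show (Xᵀ * X).IsHermitian by
    simpa only [Matrix.conjTranspose_eq_transpose_of_trivial] using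
      Matrix.isHermitian_conjTranspose_mul_self X).eigenvalues i)

/-
Write A = LC and B = RC with C = Σ^{1/2}W. Since the σᵢ are positive and W has orthonormal
rows, C has the right inverse WᵀΣ^{-1/2}, so it can be cancelled from the stationarity
equations (∇f(X)R + λL)C = 0 and (∇f(X)ᵀL + λR)C = 0. Then S = ∇f(X) + λLRᵀ is annihilated
by Lᵀ on the left and by R on the right because LᵀL = RᵀR = 1.
-/

namespace Matrix

variable {K : Type*} [Field K] {l m n p : Type*} [Fintype m] [Fintype n] [Fintype p]
  [DecidableEq m]

theorem diagonal_mul_mul_transpose_mul_diagonal_inv {d : m → K} (hd : ∀ i, d i ≠ 0)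
    {W : Matrix m n K} (hW : W * Wᵀ = 1) :
    diagonal d * W * (Wᵀ * diagonal d⁻¹) = 1 := by
  rw [Matrix.mul_assoc, ← Matrix.mul_assoc W, hW, Matrix.one_mul, diagonal_mul_diagonal,
    ← diagonal_one]
  exact congrArg diagonal (funext fun i => mul_inv_cancel₀ (hd i))

theorem mul_eq_neg_smul_of_add_smul_eq_zero {G : Matrix l p K} {P : Matrix l m K}
    {Q : Matrix p m K} {C : Matrix m n K} {C' : Matrix n m K} (hC : C * C' = 1) (lam : K)
    (h : G * (Q * C) + lam • (P * C) = 0) :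
    G * Q = (-lam) • P := by
  have hzero : (G * Q + lam • P) * C = 0 := by
    rw [Matrix.add_mul, Matrix.smul_mul, Matrix.mul_assoc, h]
  have hsum : G * Q + lam • P = 0 := by
    rw [← Matrix.mul_one (G * Q + lam • P), ← hC, ← Matrix.mul_assoc, hzero, Matrix.zero_mul]
  rw [eq_neg_of_add_eq_zero_left hsum, neg_smul]

theorem exists_eq_smul_mul_transpose_add_of_mul_eq [Fintype l] {G : Matrix l p K}
    {L : Matrix l m K} {R : Matrix p m K} (hL : Lᵀ * L = 1) (hR : Rᵀ * R = 1) (c : K)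
    (hGR : G * R = c • L) (hGL : Gᵀ * L = c • R) :
    ∃ S : Matrix l p K, G = c • (L * Rᵀ) + S ∧ Lᵀ * S = 0 ∧ S * R = 0 := by
  have hLG : Lᵀ * G = c • Rᵀ := by
    simpa only [transpose_mul, transpose_transpose, transpose_smul] using
      congrArg transpose hGL
  refine ⟨G - c • (L * Rᵀ), by abel, ?_, ?_⟩
  · rw [Matrix.mul_sub, hLG, Matrix.mul_smul, ← Matrix.mul_assoc, hL, Matrix.one_mul, sub_self]
  · rw [Matrix.sub_mul, hGR, Matrix.smul_mul, Matrix.mul_assoc, hR, Matrix.mul_one, sub_self]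

end Matrix

theorem stmt19_general {m n r k : ℕ} (lam : ℝ)
    (A : Matrix (Fin m) (Fin r) ℝ) (B : Matrix (Fin n) (Fin r) ℝ)
    (G : Matrix (Fin m) (Fin n) ℝ)
    (L : Matrix (Fin m) (Fin k) ℝ) (R : Matrix (Fin n) (Fin k) ℝ)
    (σ : Fin k → ℝ) (W : Matrix (Fin k) (Fin r) ℝ)
    (h1 : G * B + lam • A = 0)
    (h2 : Gᵀ * A + lam • B = 0)
    (hL : Lᵀ * L = 1) (hR : Rᵀ * R = 1) (hσ : ∀ i, 0 < σ i)
    (hW : W * Wᵀ = 1)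
    (hA : A = L * Matrix.diagonal (fun i => Real.sqrt (σ i)) * W)
    (hB : B = R * Matrix.diagonal (fun i => Real.sqrt (σ i)) * W) :
    G * R = (-lam) • L ∧ Gᵀ * L = (-lam) • R ∧
    ∃ S : Matrix (Fin m) (Fin n) ℝ,
      G = (-lam) • (L * Rᵀ) + S ∧ Lᵀ * S = 0 ∧ S * R = 0 := by
  have hC := diagonal_mul_mul_transpose_mul_diagonal_inv
    (fun i => (Real.sqrt_pos.2 (hσ i)).ne') hW
  rw [hA, hB, Matrix.mul_assoc L, Matrix.mul_assoc R] at h1 h2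
  have hGR := mul_eq_neg_smul_of_add_smul_eq_zero hC lam h1
  have hGL := mul_eq_neg_smul_of_add_smul_eq_zero hC lam h2
  exact ⟨hGR, hGL, exists_eq_smul_mul_transpose_add_of_mul_eq hL hR _ hGR hGL⟩

/-- At a stationary point with X = ABᵀ = LΣRᵀ a compact SVD and
A = LΣ^{1/2}W, B = RΣ^{1/2}W for W with orthonormal rows, the gradient of f
satisfies ∇f(X)·R = −λL, ∇f(X)ᵀ·L = −λR, and ∇f(X) = −λLRᵀ + S with
LᵀS = 0, SR = 0. -/
theorem stmt19 {m n r k : ℕ} (lam : ℝ) (hlam : 0 ≤ lam)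
    (f : Matrix (Fin m) (Fin n) ℝ → ℝ)
    (A : Matrix (Fin m) (Fin r) ℝ) (B : Matrix (Fin n) (Fin r) ℝ)
    (G : Matrix (Fin m) (Fin n) ℝ)
    (L : Matrix (Fin m) (Fin k) ℝ) (R : Matrix (Fin n) (Fin k) ℝ)
    (σ : Fin k → ℝ) (W : Matrix (Fin k) (Fin r) ℝ)
    (hG : ∀ H : Matrix (Fin m) (Fin n) ℝ,
      HasDerivAt (fun t : ℝ => f (A * Bᵀ + t • H)) (mip G H) 0)
    (h1 : G * B + lam • A = 0)
    (h2 : Gᵀ * A + lam • B = 0)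
    (hL : Lᵀ * L = 1) (hR : Rᵀ * R = 1) (hσ : ∀ i, 0 < σ i)
    (hX : A * Bᵀ = L * Matrix.diagonal σ * Rᵀ)
    (hW : W * Wᵀ = 1)
    (hA : A = L * Matrix.diagonal (fun i => Real.sqrt (σ i)) * W)
    (hB : B = R * Matrix.diagonal (fun i => Real.sqrt (σ i)) * W) :
    G * R = (-lam) • L ∧ Gᵀ * L = (-lam) • R ∧
    ∃ S : Matrix (Fin m) (Fin n) ℝ,
      G = (-lam) • (L * Rᵀ) + S ∧ Lᵀ * S = 0 ∧ S * R = 0 :=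
  stmt19_general lam A B G L R σ W h1 h2 hL hR hσ hW hA hB
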